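/- Let N be a positive integer and let L² be the Hilbert space of square-integrable complex functions on [0,1)^N with Lebesgue measure. Given complex numbers a_α for each α ⊆ {1,...,N}, define the bounded operator (𝒜u)(k) = Σ_{α ⊆ {1,...,N}} a_α ∫_{[0,1)^{|α|}} u(k with coordinates in α replaced by x_α) dx_α. Set b_α = Σ_{β ⊆ α} a_β. If b_α ≠ 0 for all α ⊆ {1,...,N}, then 𝒜 is invertible in the algebra of bounded operators on L², and its inverse is (𝒜^{-1}u)(k) = Σ_{α ⊆ {1,...,N}} c_α ∫_{[0,1)^{|α|}} u(k with coordinates in α replaced by x_α) dx_α, where c_α = Σ_{β ⊆ α} (−1)^{|α∖β|} b_β^{-1}. -/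

import Mathlib

open MeasureTheory

/-- The cube `[0,1)^ι` with Lebesgue measure, modelled as the product of the
Lebesgue measure on `ℝ` restricted to `[0,1)` over each coordinate. -/
noncomputable def cubeMeasure (ι : Type*) [Fintype ι] : Measure (ι → ℝ) :=
  Measure.pi fun _ => (volume : Measure ℝ).restrict (Set.Ico 0 1)

/-- `∫_{[0,1)^{|α|}} u(k with the coordinates in α replaced by x_α) dx_α`:
integration of `u` over the coordinates indexed by `α`, the remaining
coordinates being those of `k`.  For `α = ∅` this is `u k`. -/
noncomputable def partialIntegral {N : ℕ} (α : Finset (Fin N))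
    (u : (Fin N → ℝ) → ℂ) (k : Fin N → ℝ) : ℂ :=
  ∫ x : {j // j ∈ α} → ℝ, u (fun j => if h : j ∈ α then x ⟨j, h⟩ else k j)
    ∂(cubeMeasure {j // j ∈ α})

/-!
Write `P_α u` for `partialIntegral α u`. Filling in the coordinates in `α` and then those in `β`
fills in those of `α ∪ β`, and since the coordinate measures are probability measures, the map
`(k, x) ↦ (k with coordinates in α replaced by x)` is measure preserving from the square of the
cube to the cube. By Fubini, `P_α P_β = P_{α ∪ β}` and `P_∅ = 1`, so that
`(Σ p_α P_α)(Σ q_β P_β) = Σ_γ (Σ_{α ∪ β = γ} p_α q_β) P_γ`. The transform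
`p ↦ (γ ↦ Σ_{α ⊆ γ} p_α)` is injective (Möbius inversion on the Boolean lattice) and turns this
union convolution into the pointwise product; the transform of `c` is `γ ↦ b_γ⁻¹`. Hence both
compositions have the coefficients of the identity.
-/

open Finset

namespace Finset

theorem piecewise_piecewise_eq_piecewise_union {ι : Type*} [DecidableEq ι] {δ : ι → Sort*}
    (s t : Finset ι)
    (x y k : ∀ i, δ i) :
    t.piecewise y (s.piecewise x k) = (s ∪ t).piecewise (t.piecewise y x) k := by
  ext i
  by_cases hs : i ∈ s <;> by_cases ht : i ∈ t <;> simp [hs, ht]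

variable {ι R : Type*} [DecidableEq ι] [CommRing R]

theorem sum_Icc_neg_one_pow_card_sdiff {s t : Finset ι} (h : s ⊆ t) :
    ∑ u ∈ Icc s t, (-1 : R) ^ #(u \ s) = if s = t then 1 else 0 := by
  have hcancel : ∀ v ∈ (t \ s).powerset, (s ∪ v) \ s = v := fun v hv =>
    union_sdiff_cancel_left (disjoint_of_subset_right (mem_powerset.1 hv) disjoint_sdiff)
  rw [Icc_eq_image_powerset h, sum_image fun u hu v hv huv => by
    rw [← hcancel u hu, ← hcancel v hv]; exact congrArg (· \ s) huv]
  rw [sum_congr rfl fun v hv => by rw [hcancel v hv]]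
  have hsum := congrArg (Int.cast : ℤ → R) (sum_powerset_neg_one_pow_card (x := t \ s))
  push_cast at hsum
  rw [hsum]
  exact if_congr (by rw [sdiff_eq_empty_iff_subset, h.ge_iff_eq]) rfl rfl

theorem sum_powerset_sum_powerset_neg_one_pow_mul (f : Finset ι → R) (s : Finset ι) :
    ∑ t ∈ s.powerset, ∑ u ∈ t.powerset, (-1 : R) ^ #(t \ u) * f u = f s := by
  rw [sum_comm' (t' := s.powerset) (s' := fun u => Icc u s) fun t u => by
    simp only [mem_powerset, mem_Icc]
    exact ⟨fun h => ⟨⟨h.2, h.1⟩, h.2.trans h.1⟩, fun h => ⟨h.1.2, h.1.1⟩⟩]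
  simp_rw [← sum_mul]
  rw [sum_congr rfl fun u hu => by rw [sum_Icc_neg_one_pow_card_sdiff (mem_powerset.1 hu)]]
  simp

theorem eq_of_sum_powerset_eq {f g : Finset ι → R}
    (h : ∀ s : Finset ι, ∑ t ∈ s.powerset, f t = ∑ t ∈ s.powerset, g t) : f = g := by
  funext s
  rw [IncidenceAlgebra.moebius_inversion_bot f _ (fun _ => rfl) s,
    IncidenceAlgebra.moebius_inversion_bot g _ (fun _ => rfl) s]
  simp only [Iic_eq_powerset, h]

variable [Fintype ι]

theorem sum_sum_mul_smul_union_eq_apply_empty {M : Type*} [AddCommGroup M] [Module R M]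
    {p q : Finset ι → R}
    (h : ∀ s : Finset ι, (∑ t ∈ s.powerset, p t) * (∑ t ∈ s.powerset, q t) = 1)
    (f : Finset ι → M) :
    ∑ s, ∑ t, (p s * q t) • f (s ∪ t) = f ∅ := by
  set r : Finset ι → R := fun u => ∑ s, ∑ t, if s ∪ t = u then p s * q t else 0
  have hr : r = fun u => if u = ∅ then 1 else 0 := by
    refine eq_of_sum_powerset_eq fun u => ?_
    have hr_sum : ∑ v ∈ u.powerset, r v = (∑ t ∈ u.powerset, p t) * (∑ t ∈ u.powerset, q t) := by
      simp only [r, sum_mul_sum, sum_comm (s := u.powerset) (t := univ), sum_ite_eq,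
        mem_powerset, union_subset_iff, ite_and]
      simp only [← filter_subset_univ, sum_filter]
      exact sum_congr rfl fun s _ => by split_ifs <;> simp
    rw [hr_sum, h, sum_ite_eq' _ _ (fun _ => (1 : R)), if_pos (empty_mem_powerset u)]
  calc ∑ s, ∑ t, (p s * q t) • f (s ∪ t) = ∑ u, r u • f u := by
        simp only [r, sum_smul, ite_smul, zero_smul]
        conv_rhs => rw [sum_comm]
        refine sum_congr rfl fun s _ => ?_
        rw [sum_comm]
        simp only [sum_ite_eq, mem_univ, if_true]
    _ = f ∅ := by simp [hr]

end Finset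

theorem Measurable.finset_piecewise {α ι : Type*} [DecidableEq ι] {X : ι → Type*}
    [MeasurableSpace α] [∀ i, MeasurableSpace (X i)] {s : Finset ι} {f g : α → ∀ i, X i}
    (hf : Measurable f) (hg : Measurable g) : Measurable fun a => s.piecewise (f a) (g a) :=
  measurable_pi_lambda _ fun i => by
    by_cases hi : i ∈ s
    · simpa only [piecewise_eq_of_mem _ _ _ hi] using hf.eval (a := i)
    · simpa only [piecewise_eq_of_notMem _ _ _ hi] using hg.eval (a := i)

namespace MeasureTheory

variable {ι : Type*} [Fintype ι] [DecidableEq ι] {X : ι → Type*} [∀ i, MeasurableSpace (X i)]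
  {μ : ∀ i, Measure (X i)} [∀ i, IsProbabilityMeasure (μ i)]

theorem measurePreserving_piecewise (s : Finset ι) :
    MeasurePreserving (fun p : (∀ i, X i) × (∀ i, X i) => s.piecewise p.2 p.1)
      ((Measure.pi μ).prod (Measure.pi μ)) (Measure.pi μ) := by
  have hmeas : Measurable (fun p : (∀ i, X i) × (∀ i, X i) => s.piecewise p.2 p.1) :=
    measurable_snd.finset_piecewise measurable_fst
  refine ⟨hmeas, (Measure.pi_eq fun t ht => ?_).symm⟩
  have hpre : (fun p : (∀ i, X i) × (∀ i, X i) => s.piecewise p.2 p.1) ⁻¹' Set.univ.pi t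
      = (Set.univ.pi fun i => if i ∈ s then Set.univ else t i) ×ˢ
        (Set.univ.pi fun i => if i ∈ s then t i else Set.univ) := by
    ext p
    simp only [Set.mem_preimage, Set.mem_pi, Set.mem_univ, true_implies, Set.mem_prod, piecewise]
    rw [← forall_and]
    exact forall_congr' fun i => by split_ifs <;> simp
  rw [Measure.map_apply hmeas (.univ_pi ht), hpre, Measure.prod_prod, Measure.pi_pi,
    Measure.pi_pi, ← prod_mul_distrib]
  exact prod_congr rfl fun i _ => by split_ifs <;> simp

theorem measurePreserving_finsetRestrict (s : Finset ι) :
    MeasurePreserving s.restrict (Measure.pi μ) (Measure.pi fun i : s => μ i) := by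
  convert measurePreserving_fst.comp (measurePreserving_piEquivPiSubtypeProd μ (· ∈ s))
  rfl

theorem ae_ae_piecewise (s : Finset ι) {p : (∀ i, X i) → Prop} (h : ∀ᵐ z ∂Measure.pi μ, p z) :
    ∀ᵐ k ∂Measure.pi μ, ∀ᵐ x ∂Measure.pi μ, p (s.piecewise x k) :=
  Measure.ae_ae_of_ae_prod ((measurePreserving_piecewise s).quasiMeasurePreserving.ae h)

variable {E : Type*} [NormedAddCommGroup E] {f : (∀ i, X i) → E}

theorem ae_integrable_comp_piecewise (s : Finset ι) (hf : Integrable f (Measure.pi μ)) :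
    ∀ᵐ k ∂Measure.pi μ, Integrable (fun x => f (s.piecewise x k)) (Measure.pi μ) :=
  ((measurePreserving_piecewise s).integrable_comp_of_integrable hf).prod_right_ae

theorem ae_integrable_comp_piecewise_piecewise (s t : Finset ι) (hf : Integrable f (Measure.pi μ)) :
    ∀ᵐ k ∂Measure.pi μ, Integrable (fun p : (∀ i, X i) × (∀ i, X i) =>
      f (t.piecewise p.2 (s.piecewise p.1 k))) ((Measure.pi μ).prod (Measure.pi μ)) := by
  filter_upwards [ae_integrable_comp_piecewise (s ∪ t) hf] with k hk
  simp_rw [piecewise_piecewise_eq_piecewise_union s t]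
  exact (measurePreserving_piecewise t).integrable_comp_of_integrable hk

theorem ae_integral_integral_comp_piecewise_piecewise [NormedSpace ℝ E] (s t : Finset ι)
    (hf : Integrable f (Measure.pi μ)) :
    ∀ᵐ k ∂Measure.pi μ, ∫ x, ∫ y, f (t.piecewise y (s.piecewise x k)) ∂Measure.pi μ ∂Measure.pi μ
      = ∫ z, f ((s ∪ t).piecewise z k) ∂Measure.pi μ := by
  filter_upwards [ae_integrable_comp_piecewise (s ∪ t) hf,
    ae_integrable_comp_piecewise_piecewise s t hf] with k hk hk₂
  have hT := measurePreserving_piecewise (μ := μ) t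
  rw [integral_integral hk₂]
  simp_rw [piecewise_piecewise_eq_piecewise_union s t]
  have hmap := integral_map hT.measurable.aemeasurable
    (f := fun z => f ((s ∪ t).piecewise z k)) (by rw [hT.map_eq]; exact hk.aestronglyMeasurable)
  rw [hT.map_eq] at hmap
  exact hmap.symm

end MeasureTheory

instance : IsProbabilityMeasure ((volume : Measure ℝ).restrict (Set.Ico 0 1)) :=
  ⟨by simp⟩

instance (ι : Type*) [Fintype ι] : IsProbabilityMeasure (cubeMeasure ι) := by
  unfold cubeMeasure; infer_instance

section PartialIntegral

variable {N : ℕ} {u v : (Fin N → ℝ) → ℂ}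

theorem partialIntegral_eq_integral_piecewise (α : Finset (Fin N)) (hu : StronglyMeasurable u)
    (k : Fin N → ℝ) :
    partialIntegral α u k = ∫ x, u (α.piecewise x k) ∂cubeMeasure (Fin N) := by
  have hR : MeasurePreserving α.restrict (cubeMeasure (Fin N)) (cubeMeasure α) :=
    measurePreserving_finsetRestrict (μ := fun _ => volume.restrict (Set.Ico 0 1)) α
  have hmeas : StronglyMeasurable fun x : α → ℝ =>
      u (fun j => if h : j ∈ α then x ⟨j, h⟩ else k j) :=
    hu.comp_measurable (measurable_pi_lambda _ fun j => by
      by_cases h : j ∈ α <;> simp only [h, dif_pos, dif_neg, not_false_iff]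
      exacts [measurable_pi_apply _, measurable_const])
  rw [partialIntegral, ← hR.map_eq,
    integral_map hR.measurable.aemeasurable (hR.map_eq ▸ hmeas.aestronglyMeasurable)]
  rfl

theorem stronglyMeasurable_partialIntegral (α : Finset (Fin N)) (hu : StronglyMeasurable u) :
    StronglyMeasurable (partialIntegral α u) := by
  rw [funext (partialIntegral_eq_integral_piecewise α hu)]
  exact (hu.comp_measurable (measurable_snd.finset_piecewise measurable_fst)).integral_prod_right'

theorem partialIntegral_ae_congr (α : Finset (Fin N)) (hu : StronglyMeasurable u)
    (hv : StronglyMeasurable v) (h : u =ᵐ[cubeMeasure (Fin N)] v) :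
    partialIntegral α u =ᵐ[cubeMeasure (Fin N)] partialIntegral α v := by
  filter_upwards [ae_ae_piecewise α h] with k hk
  rw [partialIntegral_eq_integral_piecewise α hu, partialIntegral_eq_integral_piecewise α hv]
  exact integral_congr_ae hk

theorem partialIntegral_partialIntegral_ae (α β : Finset (Fin N)) (hu : StronglyMeasurable u)
    (hi : Integrable u (cubeMeasure (Fin N))) :
    partialIntegral α (partialIntegral β u) =ᵐ[cubeMeasure (Fin N)] partialIntegral (α ∪ β) u := by
  filter_upwards [ae_integral_integral_comp_piecewise_piecewise α β hi] with k hk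
  rw [partialIntegral_eq_integral_piecewise α (stronglyMeasurable_partialIntegral β hu),
    partialIntegral_eq_integral_piecewise _ hu]
  simp_rw [partialIntegral_eq_integral_piecewise β hu]
  exact hk

theorem ae_integrable_partialIntegral_comp_piecewise (α β : Finset (Fin N))
    (hu : StronglyMeasurable u) (hi : Integrable u (cubeMeasure (Fin N))) :
    ∀ᵐ k ∂cubeMeasure (Fin N),
      Integrable (fun x => partialIntegral β u (α.piecewise x k)) (cubeMeasure (Fin N)) := by
  filter_upwards [ae_integrable_comp_piecewise_piecewise α β hi] with k hk
  simp_rw [partialIntegral_eq_integral_piecewise β hu]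
  exact hk.integral_prod_left

theorem partialIntegral_empty (u : (Fin N → ℝ) → ℂ) (k : Fin N → ℝ) :
    partialIntegral ∅ u k = u k := by
  simp [partialIntegral, Finset.notMem_empty]

theorem stronglyMeasurable_sum_mul_partialIntegral (q : Finset (Fin N) → ℂ)
    (hu : StronglyMeasurable u) :
    StronglyMeasurable fun k => ∑ β, q β * partialIntegral β u k :=
  Finset.stronglyMeasurable_fun_sum _ fun β _ =>
    (stronglyMeasurable_partialIntegral β hu).const_mul (q β)

theorem partialIntegral_sum_mul_partialIntegral_ae (α : Finset (Fin N)) (q : Finset (Fin N) → ℂ)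
    (hu : StronglyMeasurable u) (hi : Integrable u (cubeMeasure (Fin N))) :
    partialIntegral α (fun k => ∑ β, q β * partialIntegral β u k)
      =ᵐ[cubeMeasure (Fin N)] fun k => ∑ β, q β * partialIntegral (α ∪ β) u k := by
  filter_upwards [ae_all_iff.2 fun β => partialIntegral_partialIntegral_ae α β hu hi,
    ae_all_iff.2 fun β => ae_integrable_partialIntegral_comp_piecewise α β hu hi]
    with k hcomp hint
  rw [partialIntegral_eq_integral_piecewise α (stronglyMeasurable_sum_mul_partialIntegral q hu),
    integral_finsetSum _ fun β _ => (hint β).const_mul (q β)]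
  refine Finset.sum_congr rfl fun β _ => ?_
  rw [integral_const_mul, ← partialIntegral_eq_integral_piecewise α
    (stronglyMeasurable_partialIntegral β hu), hcomp β]

end PartialIntegral

theorem mul_eq_one_of_sum_powerset_mul_sum_powerset_eq_one {N : ℕ} {p q : Finset (Fin N) → ℂ}
    {S T : Lp ℂ 2 (cubeMeasure (Fin N)) →L[ℂ] Lp ℂ 2 (cubeMeasure (Fin N))}
    (hS : ∀ u : Lp ℂ 2 (cubeMeasure (Fin N)),
      ⇑(S u) =ᵐ[cubeMeasure (Fin N)] fun k => ∑ α, p α * partialIntegral α (⇑u) k)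
    (hT : ∀ u : Lp ℂ 2 (cubeMeasure (Fin N)),
      ⇑(T u) =ᵐ[cubeMeasure (Fin N)] fun k => ∑ β, q β * partialIntegral β (⇑u) k)
    (hpq : ∀ γ : Finset (Fin N), (∑ α ∈ γ.powerset, p α) * (∑ β ∈ γ.powerset, q β) = 1) :
    S * T = 1 := by
  refine ContinuousLinearMap.ext fun u => Lp.ext ?_
  change ⇑(S (T u)) =ᵐ[_] ⇑u
  have hu : StronglyMeasurable u := Lp.stronglyMeasurable u
  have hi : Integrable u (cubeMeasure (Fin N)) := (Lp.memLp u).integrable one_le_two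
  have hTu : ∀ α, partialIntegral α (T u) =ᵐ[cubeMeasure (Fin N)]
      partialIntegral α fun k => ∑ β, q β * partialIntegral β u k := fun α =>
    partialIntegral_ae_congr α (Lp.stronglyMeasurable _)
      (stronglyMeasurable_sum_mul_partialIntegral q hu) (hT u)
  filter_upwards [hS (T u), ae_all_iff.2 hTu,
    ae_all_iff.2 fun α => partialIntegral_sum_mul_partialIntegral_ae α q hu hi] with k hSk hTk hsum
  calc S (T u) k = ∑ α, ∑ β, (p α * q β) • partialIntegral (α ∪ β) u k := by
        simp only [hSk, hTk _, hsum _, mul_sum, smul_eq_mul, mul_assoc]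
    _ = partialIntegral ∅ u k :=
        sum_sum_mul_smul_union_eq_apply_empty hpq fun γ => partialIntegral γ u k
    _ = u k := partialIntegral_empty u k

theorem stmt_12_general (N : ℕ) (a : Finset (Fin N) → ℂ)
    (hb : ∀ α : Finset (Fin N), ∑ β ∈ α.powerset, a β ≠ 0)
    (𝒜 ℬ : Lp ℂ 2 (cubeMeasure (Fin N)) →L[ℂ] Lp ℂ 2 (cubeMeasure (Fin N)))
    (h𝒜 : ∀ u : Lp ℂ 2 (cubeMeasure (Fin N)),
      ⇑(𝒜 u) =ᵐ[cubeMeasure (Fin N)] fun k =>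
        ∑ α : Finset (Fin N), a α * partialIntegral α (⇑u) k)
    (hℬ : ∀ u : Lp ℂ 2 (cubeMeasure (Fin N)),
      ⇑(ℬ u) =ᵐ[cubeMeasure (Fin N)] fun k =>
        ∑ α : Finset (Fin N),
          (∑ β ∈ α.powerset,
            (-1 : ℂ) ^ ((α \ β).card) * (∑ γ ∈ β.powerset, a γ)⁻¹) *
          partialIntegral α (⇑u) k) :
    𝒜 * ℬ = 1 ∧ ℬ * 𝒜 = 1 := by
  have hab : ∀ s : Finset (Fin N), (∑ α ∈ s.powerset, a α) *
      ∑ α ∈ s.powerset, ∑ β ∈ α.powerset,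
        (-1 : ℂ) ^ ((α \ β).card) * (∑ γ ∈ β.powerset, a γ)⁻¹ = 1 := fun s => by
    rw [sum_powerset_sum_powerset_neg_one_pow_mul, mul_inv_cancel₀ (hb s)]
  exact ⟨mul_eq_one_of_sum_powerset_mul_sum_powerset_eq_one h𝒜 hℬ hab,
    mul_eq_one_of_sum_powerset_mul_sum_powerset_eq_one hℬ h𝒜 fun s => by rw [mul_comm, hab]⟩

/-- if all the numbers `b_α = Σ_{β ⊆ α} a_β` are nonzero, the
operator `𝒜u = Σ_α a_α ∫_{[0,1)^{|α|}} u(· with α-coordinates replaced) dx_α` is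
invertible in the bounded operators on `L²([0,1)^N)`, with inverse of the same
form with coefficients `c_α = Σ_{β ⊆ α} (−1)^{|α∖β|} b_β⁻¹`. -/
theorem stmt_12 (N : ℕ) (hN : 0 < N) (a : Finset (Fin N) → ℂ)
    (hb : ∀ α : Finset (Fin N), ∑ β ∈ α.powerset, a β ≠ 0)
    (𝒜 ℬ : Lp ℂ 2 (cubeMeasure (Fin N)) →L[ℂ] Lp ℂ 2 (cubeMeasure (Fin N)))
    (h𝒜 : ∀ u : Lp ℂ 2 (cubeMeasure (Fin N)),
      ⇑(𝒜 u) =ᵐ[cubeMeasure (Fin N)] fun k =>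
        ∑ α : Finset (Fin N), a α * partialIntegral α (⇑u) k)
    (hℬ : ∀ u : Lp ℂ 2 (cubeMeasure (Fin N)),
      ⇑(ℬ u) =ᵐ[cubeMeasure (Fin N)] fun k =>
        ∑ α : Finset (Fin N),
          (∑ β ∈ α.powerset,
            (-1 : ℂ) ^ ((α \ β).card) * (∑ γ ∈ β.powerset, a γ)⁻¹) *
          partialIntegral α (⇑u) k) :
    𝒜 * ℬ = 1 ∧ ℬ * 𝒜 = 1 :=
  stmt_12_general N a hb 𝒜 ℬ h𝒜 hℬ
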